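/- arXiv:2507.12779 — 2 statements merged into one kernel-verified Lean document; each statement's English description precedes it below -/
import Mathlib

section
/- The cutoff map satisfies the boundary limits lim_{k→0⁺} ϑ(k) = vᴹ and lim_{k→1⁻} ϑ(k) = v̄. -/
open Set MeasureTheory

/-- The virtual value function `φ(v) = v - (1 - F v) / f v`. -/
noncomputable def phi (F f : ℝ → ℝ) (v : ℝ) : ℝ := v - (1 - F v) / f v

/-- The function `G(v) = φ(v)·F(v) + ∫_v^{v̄} φ(s)·f(s) ds`. -/
noncomputable def Gfun (F f : ℝ → ℝ) (vhi : ℝ) (v : ℝ) : ℝ :=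
  phi F f v * F v + ∫ s in v..vhi, phi F f s * f s

/-!
Near `k = 0`: `G` is continuous, hence bounded, on `[v̲, v̄]`, so the first-order condition forces
`φ(ϑ(k)) F(ϑ(k))² = k G(ϑ(k)) → 0`; since `v ↦ φ(v) F(v)²` is bounded away from `0` on `[a, v̄]`
for every `a > vᴹ`, eventually `vᴹ < ϑ(k) < a`.
Near `k = 1`: `F⁻¹(k) < ϑ(k) < v̄` and `F⁻¹(k) → v̄` because `F` is strictly increasing with
`F(v̄) = 1`.
-/

open Filter Topology

lemma strictMonoOn_of_forall_hasDerivAt_pos {D : Set ℝ} (hD : Convex ℝ D) {F f : ℝ → ℝ}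
    (hF : ∀ x ∈ D, HasDerivAt F (f x) x) (hf : ∀ x ∈ D, 0 < f x) : StrictMonoOn F D :=
  strictMonoOn_of_hasDerivWithinAt_pos hD (fun x hx => (hF x hx).continuousAt.continuousWithinAt)
    (fun x hx => (hF x (interior_subset hx)).hasDerivWithinAt) fun x hx => hf x (interior_subset hx)

section Continuity

variable {F f : ℝ → ℝ}

lemma continuousOn_phi {s : Set ℝ} (hF : ContinuousOn F s) (hf : ContinuousOn f s)
    (hf0 : ∀ v ∈ s, f v ≠ 0) : ContinuousOn (phi F f) s :=
  continuousOn_id.sub ((continuousOn_const.sub hF).div hf hf0)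

lemma continuousOn_Gfun {vlo vhi : ℝ} (hle : vlo ≤ vhi) (hF : ContinuousOn F (Icc vlo vhi))
    (hf : ContinuousOn f (Icc vlo vhi)) (hf0 : ∀ v ∈ Icc vlo vhi, f v ≠ 0) :
    ContinuousOn (Gfun F f vhi) (Icc vlo vhi) := by
  have hφ := continuousOn_phi hF hf hf0
  have hint : IntegrableOn (fun s => phi F f s * f s) (uIcc vlo vhi) := by
    rw [uIcc_of_le hle]
    exact (hφ.mul hf).integrableOn_Icc
  have hprim := intervalIntegral.continuousOn_primitive_interval_left hint
  rw [uIcc_of_le hle] at hprim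
  exact (hφ.mul hF).add hprim

end Continuity

lemma exists_pos_le_mul_sq_of_lt {φ F : ℝ → ℝ} {vlo vhi vM a : ℝ}
    (hφ : StrictMonoOn φ (Icc vlo vhi)) (hF : StrictMonoOn F (Icc vlo vhi)) (hFlo : F vlo = 0)
    (hvM : vM ∈ Icc vlo vhi) (hφvM : 0 ≤ φ vM) (ha : vM < a) :
    ∃ c > 0, ∀ v ∈ Icc vlo vhi, a ≤ v → c ≤ φ v * F v ^ 2 := by
  by_cases hav : a ≤ vhi
  · have haI : a ∈ Icc vlo vhi := ⟨hvM.1.trans ha.le, hav⟩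
    have hφa : 0 < φ a := hφvM.trans_lt (hφ hvM haI ha)
    have hFa : 0 < F a := hFlo ▸ hF (left_mem_Icc.2 (hvM.1.trans hvM.2)) haI (hvM.1.trans_lt ha)
    refine ⟨φ a * F a ^ 2, by positivity, fun v hv hav => ?_⟩
    have hφv : φ a ≤ φ v := hφ.monotoneOn haI hv hav
    exact mul_le_mul hφv (pow_le_pow_left₀ hFa.le (hF.monotoneOn haI hv hav) 2) (by positivity)
      (hφa.le.trans hφv)
  · exact ⟨1, one_pos, fun v hv hav' => absurd (hav'.trans hv.2) hav⟩

lemma tendsto_nhdsGT_zero_of_mul_eq {s : Set ℝ} {g h θ : ℝ → ℝ} {vM B : ℝ}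
    (hg : ∀ v ∈ s, ‖g v‖ ≤ B) (hθ : ∀ k ∈ Ioo (0 : ℝ) 1, θ k ∈ s ∧ k * g (θ k) = h (θ k))
    (hlow : ∀ k ∈ Ioo (0 : ℝ) 1, vM < θ k)
    (hh : ∀ a, vM < a → ∃ c > 0, ∀ v ∈ s, a ≤ v → c ≤ h v) :
    Tendsto θ (𝓝[>] 0) (𝓝 vM) := by
  have hIoo : ∀ᶠ k in 𝓝[>] (0 : ℝ), k ∈ Ioo (0 : ℝ) 1 := Ioo_mem_nhdsGT one_pos
  have hbdd : IsBoundedUnder (· ≤ ·) (𝓝[>] (0 : ℝ)) ((‖·‖) ∘ (g ∘ θ)) :=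
    isBoundedUnder_of_eventually_le (a := B) <| hIoo.mono fun k hk => hg _ (hθ k hk).1
  have hlim : Tendsto (fun k => k * g (θ k)) (𝓝[>] 0) (𝓝 0) :=
    (tendsto_nhdsWithin_of_tendsto_nhds tendsto_id).zero_mul_isBoundedUnder_le hbdd
  refine tendsto_order.2 ⟨fun a ha => hIoo.mono fun k hk => ha.trans (hlow k hk), fun a ha => ?_⟩
  obtain ⟨c, hc, hca⟩ := hh a ha
  filter_upwards [hIoo, hlim.eventually (gt_mem_nhds hc)] with k hk hkc
  by_contra! hak
  obtain ⟨hθs, hfoc⟩ := hθ k hk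
  exact (hca _ hθs hak).not_gt (hfoc ▸ hkc)

lemma tendsto_nhdsLT_one_of_rightInverse {F FInv : ℝ → ℝ} {vlo vhi : ℝ}
    (hF : StrictMonoOn F (Icc vlo vhi)) (hFhi : F vhi = 1)
    (hFInv : ∀ k ∈ Ioo (0 : ℝ) 1, FInv k ∈ Icc vlo vhi ∧ F (FInv k) = k) :
    Tendsto FInv (𝓝[<] 1) (𝓝 vhi) := by
  have hIoo : ∀ᶠ k in 𝓝[<] (1 : ℝ), k ∈ Ioo (0 : ℝ) 1 := Ioo_mem_nhdsLT one_pos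
  refine tendsto_order.2 ⟨fun a ha => ?_, fun a ha => hIoo.mono fun k hk =>
    (hFInv k hk).1.2.trans_lt ha⟩
  by_cases hav : a < vlo
  · exact hIoo.mono fun k hk => hav.trans_le (hFInv k hk).1.1
  · have haI : a ∈ Icc vlo vhi := ⟨not_lt.1 hav, ha.le⟩
    have hFa : F a < 1 := hFhi ▸ hF haI (right_mem_Icc.2 (haI.1.trans haI.2)) ha
    filter_upwards [hIoo, Ioo_mem_nhdsLT hFa] with k hk hk'
    obtain ⟨hFIk, hFk⟩ := hFInv k hk
    exact (hF.lt_iff_lt haI hFIk).1 (by rw [hFk]; exact hk'.1)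

theorem stmt_10_general
    (vlo vhi : ℝ) (hlt : vlo < vhi)
    (F f : ℝ → ℝ)
    (hFlo : F vlo = 0) (hFhi : F vhi = 1)
    (hFderiv : ∀ v ∈ Set.Icc vlo vhi, HasDerivAt F (f v) v)
    (hfpos : ∀ v ∈ Set.Icc vlo vhi, 0 < f v)
    (hfdiff : DifferentiableOn ℝ f (Set.Icc vlo vhi))
    (hreg : StrictMonoOn (phi F f) (Set.Icc vlo vhi))
    (vM : ℝ) (hvM : IsLeast {v ∈ Set.Icc vlo vhi | 0 ≤ phi F f v} vM)
    (FInv : ℝ → ℝ)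
    (hFInv : ∀ k ∈ Set.Ioo (0:ℝ) 1, FInv k ∈ Set.Icc vlo vhi ∧ F (FInv k) = k)
    (θ : ℝ → ℝ)
    (hθ : ∀ k ∈ Set.Ioo (0:ℝ) 1, θ k ∈ Set.Icc vlo vhi ∧
      k * Gfun F f vhi (θ k) = phi F f (θ k) * (F (θ k)) ^ 2)
    (hθloc : ∀ k ∈ Set.Ioo (0:ℝ) 1, θ k ∈ Set.Ioo (max vM (FInv k)) vhi)
    :
    Filter.Tendsto θ (nhdsWithin 0 (Set.Ioi (0:ℝ))) (nhds vM) ∧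
      Filter.Tendsto θ (nhdsWithin 1 (Set.Iio (1:ℝ))) (nhds vhi) := by
  have hFs : StrictMonoOn F (Icc vlo vhi) :=
    strictMonoOn_of_forall_hasDerivAt_pos (convex_Icc _ _) hFderiv hfpos
  have hFcont : ContinuousOn F (Icc vlo vhi) := fun v hv =>
    (hFderiv v hv).continuousAt.continuousWithinAt
  obtain ⟨B, hB⟩ := isCompact_Icc.exists_bound_of_continuousOn <|
    continuousOn_Gfun hlt.le hFcont hfdiff.continuousOn fun v hv => (hfpos v hv).ne'
  refine ⟨tendsto_nhdsGT_zero_of_mul_eq hB hθ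
    (fun k hk => (le_max_left _ _).trans_lt (hθloc k hk).1)
    fun a ha => exists_pos_le_mul_sq_of_lt hreg hFs hFlo hvM.1.1 hvM.1.2 ha, ?_⟩
  have hIoo : ∀ᶠ k in 𝓝[<] (1 : ℝ), k ∈ Ioo (0 : ℝ) 1 := Ioo_mem_nhdsLT one_pos
  exact tendsto_of_tendsto_of_tendsto_of_le_of_le'
    (tendsto_nhdsLT_one_of_rightInverse hFs hFhi hFInv) tendsto_const_nhds
    (hIoo.mono fun k hk => ((le_max_right _ _).trans_lt (hθloc k hk).1).le)
    (hIoo.mono fun k hk => (hθloc k hk).2.le)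

/-- boundary limits of the cutoff map:
`lim_{k→0⁺} ϑ(k) = vᴹ` and `lim_{k→1⁻} ϑ(k) = v̄`. -/
theorem stmt_10
    (vlo vhi : ℝ) (hvlo : 0 ≤ vlo) (hlt : vlo < vhi)
    (F f : ℝ → ℝ) (hFmono : Monotone F)
    (hFlo : F vlo = 0) (hFhi : F vhi = 1)
    (hFderiv : ∀ v ∈ Set.Icc vlo vhi, HasDerivAt F (f v) v)
    (hfpos : ∀ v ∈ Set.Icc vlo vhi, 0 < f v)
    (hfdiff : DifferentiableOn ℝ f (Set.Icc vlo vhi))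
    (hreg : StrictMonoOn (phi F f) (Set.Icc vlo vhi))
    (vM : ℝ) (hvM : IsLeast {v ∈ Set.Icc vlo vhi | 0 ≤ phi F f v} vM)
    (FInv : ℝ → ℝ)
    (hFInv : ∀ k ∈ Set.Ioo (0:ℝ) 1, FInv k ∈ Set.Icc vlo vhi ∧ F (FInv k) = k)
    (θ : ℝ → ℝ)
    (hθ : ∀ k ∈ Set.Ioo (0:ℝ) 1, θ k ∈ Set.Icc vlo vhi ∧
      k * Gfun F f vhi (θ k) = phi F f (θ k) * (F (θ k)) ^ 2)
    (hθuniq : ∀ k ∈ Set.Ioo (0:ℝ) 1, ∀ v ∈ Set.Icc vlo vhi,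
      k * Gfun F f vhi v = phi F f v * (F v) ^ 2 → v = θ k)
    (hθloc : ∀ k ∈ Set.Ioo (0:ℝ) 1, θ k ∈ Set.Ioo (max vM (FInv k)) vhi)
    :
    Filter.Tendsto θ (nhdsWithin 0 (Set.Ioi (0:ℝ))) (nhds vM) ∧
      Filter.Tendsto θ (nhdsWithin 1 (Set.Iio (1:ℝ))) (nhds vhi) :=
  stmt_10_general vlo vhi hlt F f hFlo hFhi hFderiv hfpos hfdiff hreg vM hvM FInv hFInv θ hθ hθloc
end

section
/- Suppose vᴹ = v̲ and the hazard rate f(v)/(1 − F(v)) is nondecreasing on [v̲, v̄). Then the posted price p(k) := ϑ(k)·(1 − k/F(ϑ(k))) is non-increasing in k on (0,1) if and only if f(v̲)·v̲ ≥ 2. -/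
/-
Writing the first-order condition as `k = φ F² / G` at `v = ϑ(k)` and using
`G(v) = v - F(v)(1 - F(v))/f(v) = φ(v) F(v) + v (1 - F(v))`, the posted price is `p(k) = H(ϑ(k))`
with `H(v) = v² (1 - F(v)) / G(v)`. Uniqueness of the root and the intermediate value theorem make
`ϑ` a strictly increasing bijection of `(0,1)` onto `(v̲, v̄)`, so `p` is non-increasing iff `H` is.
Regularity gives `G' = φ' F ≥ 0`, and the monotone hazard rate gives `(1 - F(v)) f(v̲) ≤ f(v)`, so
when `f(v̲) v̲ ≥ 2` the numerator `v² (1 - F(v))` decreases and hence so does `H`. Conversely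
`H(v̲) = v̲` and, as `G'(v̲) = 0`, `H'(v̲) = 2 - f(v̲) v̲`, which must then be `≤ 0`.
-/

open Set MeasureTheory

open Filter Topology

noncomputable def Gclosed (F f : ℝ → ℝ) (v : ℝ) : ℝ := v - F v * (1 - F v) / f v

noncomputable def thresholdCapacity (F f : ℝ → ℝ) (v : ℝ) : ℝ :=
  phi F f v * F v ^ 2 / Gclosed F f v

noncomputable def thresholdPrice (F f : ℝ → ℝ) (v : ℝ) : ℝ := v ^ 2 * (1 - F v) / Gclosed F f v

section Calculus

variable {F f : ℝ → ℝ} {s : Set ℝ} {x d : ℝ}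

theorem Gclosed_eq_phi_mul_add (hfx : f x ≠ 0) :
    Gclosed F f x = phi F f x * F x + x * (1 - F x) := by
  rw [Gclosed, phi]
  field_simp
  ring

theorem hasDerivWithinAt_phi (hF : HasDerivWithinAt F (f x) s x) (hf : HasDerivWithinAt f d s x)
    (hfx : f x ≠ 0) : HasDerivWithinAt (phi F f) (2 + (1 - F x) * d / f x ^ 2) s x :=
  ((hasDerivWithinAt_id x s).sub ((hF.const_sub 1).div hf hfx)).congr_deriv (by
    field_simp; ring)

theorem hasDerivWithinAt_Gclosed (hF : HasDerivWithinAt F (f x) s x)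
    (hf : HasDerivWithinAt f d s x) (hfx : f x ≠ 0) :
    HasDerivWithinAt (Gclosed F f) (F x * (2 + (1 - F x) * d / f x ^ 2)) s x :=
  ((hasDerivWithinAt_id x s).sub ((hF.mul (hF.const_sub 1)).div hf hfx)).congr_deriv (by
    simp only [Pi.mul_apply]; field_simp; ring)

theorem integral_phi_mul {a b : ℝ} (hab : a ≤ b) (hF : ∀ v ∈ Icc a b, HasDerivAt F (f v) v)
    (hfc : ContinuousOn f (Icc a b)) (hf0 : ∀ v ∈ Icc a b, f v ≠ 0) :
    ∫ v in a..b, phi F f v * f v = a * (1 - F a) - b * (1 - F b) := by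
  rw [← uIcc_of_le hab] at hF hfc hf0
  have hFc : ContinuousOn F (uIcc a b) := fun v hv => (hF v hv).continuousAt.continuousWithinAt
  have hderiv : ∀ v ∈ uIcc a b, HasDerivAt (fun v => v * (F v - 1)) (phi F f v * f v) v :=
    fun v hv => ((hasDerivAt_id v).mul ((hF v hv).sub_const 1)).congr_deriv (by
      simp only [phi, id]; field_simp [hf0 v hv]; ring)
  have hint : IntervalIntegrable (fun v => phi F f v * f v) volume a b :=
    ((continuousOn_id.sub ((continuousOn_const.sub hFc).div hfc hf0)).mul hfc).intervalIntegrable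
  rw [intervalIntegral.integral_eq_sub_of_hasDerivAt hderiv hint]
  ring

theorem Gfun_eq_Gclosed {a b : ℝ} (hab : a ≤ b) (hF : ∀ v ∈ Icc a b, HasDerivAt F (f v) v)
    (hfc : ContinuousOn f (Icc a b)) (hf0 : ∀ v ∈ Icc a b, f v ≠ 0) (hFb : F b = 1) :
    Gfun F f b a = Gclosed F f a := by
  rw [Gfun, integral_phi_mul hab hF hfc hf0, hFb, Gclosed_eq_phi_mul_add (hf0 a ⟨le_rfl, hab⟩)]
  ring

end Calculus

theorem StrictMonoOn.antitoneOn_comp_iff {α β γ : Type*} [LinearOrder α] [Preorder β] [Preorder γ]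
    {θ : α → β} {H : β → γ} {s : Set α} (hθ : StrictMonoOn θ s) :
    AntitoneOn (H ∘ θ) s ↔ AntitoneOn H (θ '' s) := by
  constructor
  · rintro h _ ⟨a, ha, rfl⟩ _ ⟨b, hb, rfl⟩ hab
    exact h ha hb ((hθ.le_iff_le ha hb).1 hab)
  · intro h a ha b hb hab
    exact h (mem_image_of_mem θ ha) (mem_image_of_mem θ hb) (hθ.monotoneOn ha hb hab)

theorem AntitoneOn.div_of_monotoneOn {α : Type*} [Preorder α] {u g : α → ℝ} {s : Set α}
    (hu : AntitoneOn u s) (hg : MonotoneOn g s) (hu0 : ∀ x ∈ s, 0 ≤ u x)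
    (hg0 : ∀ x ∈ s, 0 < g x) : AntitoneOn (fun x => u x / g x) s :=
  fun x hx _ hy hxy => div_le_div₀ (hu0 x hx) (hu hx hy hxy) (hg0 x hx) (hg hx hy hxy)

/- For `k₁ < k₂`, the intermediate value theorem on `[a, θ k₂]` produces the solution `θ k₁`. -/
theorem strictMonoOn_of_unique_preimage {K θ : ℝ → ℝ} {a b : ℝ} {s : Set ℝ}
    (hK : ContinuousOn K (Icc a b)) (hKa : ∀ k ∈ s, K a ≤ k)
    (hθ : ∀ k ∈ s, θ k ∈ Icc a b ∧ K (θ k) = k)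
    (huniq : ∀ k ∈ s, ∀ v ∈ Icc a b, K v = k → v = θ k) : StrictMonoOn θ s := by
  intro k₁ hk₁ k₂ hk₂ hlt
  obtain ⟨hθ₂, hKθ₂⟩ := hθ k₂ hk₂
  have hsub : Icc a (θ k₂) ⊆ Icc a b := Icc_subset_Icc_right hθ₂.2
  obtain ⟨v, hv, hKv⟩ := intermediate_value_Icc hθ₂.1 (hK.mono hsub)
    ⟨hKa k₁ hk₁, hKθ₂.symm ▸ hlt.le⟩
  rw [← huniq k₁ hk₁ v (hsub hv) hKv]
  refine hv.2.lt_of_ne ?_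
  rintro rfl
  exact hlt.ne (hKv.symm.trans hKθ₂)

theorem two_mul_one_sub_le_of_monotoneOn_hazard {F f : ℝ → ℝ} {a b x : ℝ}
    (hhazard : MonotoneOn (fun v => f v / (1 - F v)) (Ico a b)) (hFa : F a = 0) (ha : 0 < f a)
    (h2 : 2 ≤ f a * a) (hx : x ∈ Ico a b) (hFx : F x < 1) : 2 * (1 - F x) ≤ x * f x := by
  have hFx' : 0 < 1 - F x := sub_pos.2 hFx
  have hle : f a * (1 - F x) ≤ f x := by
    have := hhazard (left_mem_Ico.2 (hx.1.trans_lt hx.2)) hx hx.1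
    simp only [hFa, sub_zero, div_one] at this
    rwa [le_div_iff₀ hFx'] at this
  have ha0 : 0 ≤ a := by nlinarith
  calc 2 * (1 - F x) ≤ f a * a * (1 - F x) := by nlinarith
    _ = a * (f a * (1 - F x)) := by ring
    _ ≤ a * f x := mul_le_mul_of_nonneg_left hle ha0
    _ ≤ x * f x := mul_le_mul_of_nonneg_right hx.1 (by nlinarith)

structure RegularValueDistribution (F f : ℝ → ℝ) (vlo vhi : ℝ) : Prop where
  lt : vlo < vhi
  hasDerivAt : ∀ v ∈ Icc vlo vhi, HasDerivAt F (f v) v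
  pos : ∀ v ∈ Icc vlo vhi, 0 < f v
  differentiableOn : DifferentiableOn ℝ f (Icc vlo vhi)
  F_left : F vlo = 0
  F_right : F vhi = 1
  strictMonoOn_phi : StrictMonoOn (phi F f) (Icc vlo vhi)

namespace RegularValueDistribution

variable {F f : ℝ → ℝ} {vlo vhi v : ℝ}

theorem left_mem (h : RegularValueDistribution F f vlo vhi) : vlo ∈ Icc vlo vhi :=
  left_mem_Icc.2 h.lt.le

theorem continuousOn_F (h : RegularValueDistribution F f vlo vhi) :
    ContinuousOn F (Icc vlo vhi) :=
  fun v hv => (h.hasDerivAt v hv).continuousAt.continuousWithinAt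

theorem f_ne_zero (h : RegularValueDistribution F f vlo vhi) :
    ∀ v ∈ Icc vlo vhi, f v ≠ 0 :=
  fun v hv => (h.pos v hv).ne'

theorem strictMonoOn_F (h : RegularValueDistribution F f vlo vhi) :
    StrictMonoOn F (Icc vlo vhi) :=
  strictMonoOn_of_deriv_pos (convex_Icc _ _) h.continuousOn_F fun x hx => by
    rw [interior_Icc] at hx
    rw [(h.hasDerivAt x (Ioo_subset_Icc_self hx)).deriv]
    exact h.pos x (Ioo_subset_Icc_self hx)

theorem F_nonneg (h : RegularValueDistribution F f vlo vhi) (hv : v ∈ Icc vlo vhi) : 0 ≤ F v :=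
  h.F_left ▸ h.strictMonoOn_F.monotoneOn h.left_mem hv hv.1

theorem F_pos (h : RegularValueDistribution F f vlo vhi) (hv : v ∈ Ioc vlo vhi) : 0 < F v :=
  h.F_left ▸ h.strictMonoOn_F h.left_mem (Ioc_subset_Icc_self hv) hv.1

theorem F_le_one (h : RegularValueDistribution F f vlo vhi) (hv : v ∈ Icc vlo vhi) : F v ≤ 1 :=
  h.F_right ▸ h.strictMonoOn_F.monotoneOn hv (right_mem_Icc.2 h.lt.le) hv.2

theorem F_lt_one (h : RegularValueDistribution F f vlo vhi) (hv : v ∈ Ico vlo vhi) : F v < 1 :=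
  h.F_right ▸ h.strictMonoOn_F (Ico_subset_Icc_self hv) (right_mem_Icc.2 h.lt.le) hv.2

theorem hasDerivAt_f (h : RegularValueDistribution F f vlo vhi) (hv : v ∈ Ioo vlo vhi) :
    HasDerivAt f (deriv f v) v :=
  (h.differentiableOn.differentiableAt (Icc_mem_nhds hv.1 hv.2)).hasDerivAt

theorem Gfun_eq (h : RegularValueDistribution F f vlo vhi) (hv : v ∈ Icc vlo vhi) :
    Gfun F f vhi v = Gclosed F f v :=
  have hsub : Icc v vhi ⊆ Icc vlo vhi := Icc_subset_Icc_left hv.1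
  Gfun_eq_Gclosed hv.2 (fun w hw => h.hasDerivAt w (hsub hw))
    (h.differentiableOn.continuousOn.mono hsub) (fun w hw => h.f_ne_zero w (hsub hw)) h.F_right

theorem continuousOn_Gclosed (h : RegularValueDistribution F f vlo vhi) :
    ContinuousOn (Gclosed F f) (Icc vlo vhi) :=
  continuousOn_id.sub ((h.continuousOn_F.mul (continuousOn_const.sub h.continuousOn_F)).div
    h.differentiableOn.continuousOn h.f_ne_zero)

theorem monotoneOn_Gclosed (h : RegularValueDistribution F f vlo vhi) :
    MonotoneOn (Gclosed F f) (Icc vlo vhi) := by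
  refine monotoneOn_of_hasDerivWithinAt_nonneg (convex_Icc _ _) h.continuousOn_Gclosed
    (fun x hx => ?_) (fun x hx => ?_)
    (f' := fun x => F x * (2 + (1 - F x) * deriv f x / f x ^ 2))
  all_goals
    rw [interior_Icc] at hx
    have hxI := Ioo_subset_Icc_self hx
  · rw [interior_Icc]
    exact hasDerivWithinAt_Gclosed (h.hasDerivAt x hxI).hasDerivWithinAt
      (h.hasDerivAt_f hx).hasDerivWithinAt (h.f_ne_zero x hxI)
  · have hφ' := hasDerivWithinAt_phi (s := Ioo vlo vhi) (h.hasDerivAt x hxI).hasDerivWithinAt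
      (h.hasDerivAt_f hx).hasDerivWithinAt (h.f_ne_zero x hxI)
    exact mul_nonneg (h.F_nonneg hxI) (hφ'.nonneg_of_monotoneOn (isOpen_Ioo.preperfect x hx)
      (h.strictMonoOn_phi.monotoneOn.mono Ioo_subset_Icc_self))

theorem vlo_pos (h : RegularValueDistribution F f vlo vhi) (hφ : 0 ≤ phi F f vlo) : 0 < vlo := by
  have hf := h.pos vlo h.left_mem
  rw [phi, h.F_left, sub_zero, sub_nonneg, div_le_iff₀ hf] at hφ
  nlinarith

theorem phi_pos (h : RegularValueDistribution F f vlo vhi) (hφ : 0 ≤ phi F f vlo)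
    (hv : v ∈ Ioc vlo vhi) : 0 < phi F f v :=
  hφ.trans_lt (h.strictMonoOn_phi h.left_mem (Ioc_subset_Icc_self hv) hv.1)

theorem Gclosed_pos (h : RegularValueDistribution F f vlo vhi) (hφ : 0 ≤ phi F f vlo)
    (hv : v ∈ Icc vlo vhi) : 0 < Gclosed F f v :=
  calc 0 < vlo := h.vlo_pos hφ
    _ = Gclosed F f vlo := by simp [Gclosed, h.F_left]
    _ ≤ Gclosed F f v := h.monotoneOn_Gclosed h.left_mem hv hv.1

theorem thresholdCapacity_eq_iff (h : RegularValueDistribution F f vlo vhi)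
    (hφ : 0 ≤ phi F f vlo) (hv : v ∈ Icc vlo vhi) {k : ℝ} :
    thresholdCapacity F f v = k ↔ k * Gfun F f vhi v = phi F f v * F v ^ 2 := by
  rw [thresholdCapacity, h.Gfun_eq hv, div_eq_iff (h.Gclosed_pos hφ hv).ne', eq_comm]

theorem continuousOn_thresholdCapacity (h : RegularValueDistribution F f vlo vhi)
    (hφ : 0 ≤ phi F f vlo) : ContinuousOn (thresholdCapacity F f) (Icc vlo vhi) :=
  ((continuousOn_id.sub ((continuousOn_const.sub h.continuousOn_F).div
    h.differentiableOn.continuousOn h.f_ne_zero)).mul (h.continuousOn_F.pow 2)).div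
    h.continuousOn_Gclosed fun _ hv => (h.Gclosed_pos hφ hv).ne'

theorem thresholdCapacity_left (h : RegularValueDistribution F f vlo vhi) :
    thresholdCapacity F f vlo = 0 := by
  simp [thresholdCapacity, h.F_left]

theorem thresholdCapacity_right (h : RegularValueDistribution F f vlo vhi)
    (hφ : 0 ≤ phi F f vlo) : thresholdCapacity F f vhi = 1 := by
  have : vhi ≠ 0 := ((h.vlo_pos hφ).trans h.lt).ne'
  simp [thresholdCapacity, phi, Gclosed, h.F_right, this]

theorem thresholdCapacity_mem_Ioo (h : RegularValueDistribution F f vlo vhi)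
    (hφ : 0 ≤ phi F f vlo) (hv : v ∈ Ioo vlo vhi) : thresholdCapacity F f v ∈ Ioo 0 1 := by
  have hvI := Ioo_subset_Icc_self hv
  have hφv := h.phi_pos hφ (Ioo_subset_Ioc_self hv)
  have hF := h.F_pos (Ioo_subset_Ioc_self hv)
  have hF1 := h.F_lt_one (Ioo_subset_Ico_self hv)
  have hG := h.Gclosed_pos hφ hvI
  refine ⟨by unfold thresholdCapacity; positivity, ?_⟩
  rw [thresholdCapacity, div_lt_one hG, Gclosed_eq_phi_mul_add (h.f_ne_zero v hvI)]
  nlinarith [mul_pos (mul_pos hφv hF) (sub_pos.2 hF1),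
    mul_pos ((h.vlo_pos hφ).trans hv.1) (sub_pos.2 hF1)]

theorem mem_Ioo_of_thresholdCapacity_mem_Ioo (h : RegularValueDistribution F f vlo vhi)
    (hφ : 0 ≤ phi F f vlo) (hv : v ∈ Icc vlo vhi) (hK : thresholdCapacity F f v ∈ Ioo 0 1) :
    v ∈ Ioo vlo vhi := by
  refine ⟨hv.1.lt_of_ne ?_, hv.2.lt_of_ne ?_⟩ <;> rintro rfl
  · simp [h.thresholdCapacity_left] at hK
  · simp [h.thresholdCapacity_right hφ] at hK

theorem image_eq_Ioo_of_thresholdCapacity (h : RegularValueDistribution F f vlo vhi)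
    (hφ : 0 ≤ phi F f vlo) {θ : ℝ → ℝ}
    (hθ : ∀ k ∈ Ioo (0 : ℝ) 1, θ k ∈ Icc vlo vhi ∧ thresholdCapacity F f (θ k) = k)
    (huniq : ∀ k ∈ Ioo (0 : ℝ) 1, ∀ v ∈ Icc vlo vhi, thresholdCapacity F f v = k → v = θ k) :
    θ '' Ioo 0 1 = Ioo vlo vhi := by
  refine Subset.antisymm ?_ fun v hv => ?_
  · rintro _ ⟨k, hk, rfl⟩
    exact h.mem_Ioo_of_thresholdCapacity_mem_Ioo hφ (hθ k hk).1 ((hθ k hk).2.symm ▸ hk)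
  · have hK := h.thresholdCapacity_mem_Ioo hφ hv
    exact ⟨_, hK, (huniq _ hK v (Ioo_subset_Icc_self hv) rfl).symm⟩

theorem mul_one_sub_div_eq_thresholdPrice (h : RegularValueDistribution F f vlo vhi)
    (hφ : 0 ≤ phi F f vlo) (hv : v ∈ Ioo vlo vhi) {k : ℝ} (hk : thresholdCapacity F f v = k) :
    v * (1 - k / F v) = thresholdPrice F f v := by
  subst hk
  have hvI := Ioo_subset_Icc_self hv
  have hF := (h.F_pos (Ioo_subset_Ioc_self hv)).ne'
  have hG := (h.Gclosed_pos hφ hvI).ne'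
  rw [thresholdCapacity, thresholdPrice, eq_div_iff hG]
  rw [Gclosed_eq_phi_mul_add (h.f_ne_zero v hvI)] at hG ⊢
  field_simp
  ring

theorem antitoneOn_thresholdPrice (h : RegularValueDistribution F f vlo vhi)
    (hφ : 0 ≤ phi F f vlo) (hhazard : MonotoneOn (fun v => f v / (1 - F v)) (Ico vlo vhi))
    (h2 : 2 ≤ f vlo * vlo) : AntitoneOn (thresholdPrice F f) (Icc vlo vhi) := by
  have hu : AntitoneOn (fun v => v ^ 2 * (1 - F v)) (Icc vlo vhi) := by
    refine antitoneOn_of_hasDerivWithinAt_nonpos (convex_Icc _ _)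
      ((continuousOn_id.pow 2).mul (continuousOn_const.sub h.continuousOn_F))
      (fun x hx => ?_) (fun x hx => ?_) (f' := fun x => x * (2 * (1 - F x) - x * f x))
    all_goals
      rw [interior_Icc] at hx
      have hxI := Ioo_subset_Icc_self hx
    · rw [interior_Icc]
      refine HasDerivAt.hasDerivWithinAt ?_
      exact ((hasDerivAt_pow 2 x).mul ((h.hasDerivAt x hxI).const_sub 1)).congr_deriv (by ring)
    · exact mul_nonpos_of_nonneg_of_nonpos ((h.vlo_pos hφ).trans hx.1).le
        (sub_nonpos.2 (two_mul_one_sub_le_of_monotoneOn_hazard hhazard h.F_left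
          (h.pos vlo h.left_mem) h2 (Ioo_subset_Ico_self hx) (h.F_lt_one (Ioo_subset_Ico_self hx))))
  exact hu.div_of_monotoneOn h.monotoneOn_Gclosed
    (fun v hv => mul_nonneg (sq_nonneg v) (sub_nonneg.2 (h.F_le_one hv)))
    (fun v hv => h.Gclosed_pos hφ hv)

theorem two_le_of_antitoneOn_thresholdPrice (h : RegularValueDistribution F f vlo vhi)
    (hvlo : vlo ≠ 0) (hanti : AntitoneOn (thresholdPrice F f) (Ioo vlo vhi)) :
    2 ≤ f vlo * vlo := by
  have hf0 := h.f_ne_zero vlo h.left_mem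
  have hF := (h.hasDerivAt vlo h.left_mem).hasDerivWithinAt (s := Ioo vlo vhi)
  have hf := (h.differentiableOn vlo h.left_mem).hasDerivWithinAt.mono Ioo_subset_Icc_self
  have hu := ((hasDerivAt_pow 2 vlo).hasDerivWithinAt).mul (hF.const_sub 1)
  have hderiv : HasDerivWithinAt (thresholdPrice F f) (2 - f vlo * vlo) (Ioo vlo vhi) vlo := by
    refine (hu.div (hasDerivWithinAt_Gclosed hF hf hf0) ?_).congr_deriv ?_
    · simpa [Gclosed, h.F_left] using hvlo
    · simp only [Gclosed, h.F_left]
      field_simp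
      ring
  have hacc : AccPt vlo (𝓟 (Ioo vlo vhi)) := by
    rw [accPt_principal_iff_nhdsWithin,
      sdiff_singleton_eq_self (fun hv : vlo ∈ Ioo vlo vhi => hv.1.false)]
    exact left_nhdsWithin_Ioo_neBot h.lt
  linarith [hderiv.nonpos_of_antitoneOn hacc hanti]

theorem antitoneOn_thresholdPrice_iff (h : RegularValueDistribution F f vlo vhi)
    (hφ : 0 ≤ phi F f vlo) (hhazard : MonotoneOn (fun v => f v / (1 - F v)) (Ico vlo vhi)) :
    AntitoneOn (thresholdPrice F f) (Ioo vlo vhi) ↔ 2 ≤ f vlo * vlo :=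
  ⟨h.two_le_of_antitoneOn_thresholdPrice (h.vlo_pos hφ).ne',
    fun h2 => (h.antitoneOn_thresholdPrice hφ hhazard h2).mono Ioo_subset_Icc_self⟩

end RegularValueDistribution

theorem stmt_17_general
    (vlo vhi : ℝ) (hlt : vlo < vhi)
    (F f : ℝ → ℝ)
    (hFlo : F vlo = 0) (hFhi : F vhi = 1)
    (hFderiv : ∀ v ∈ Set.Icc vlo vhi, HasDerivAt F (f v) v)
    (hfpos : ∀ v ∈ Set.Icc vlo vhi, 0 < f v)
    (hfdiff : DifferentiableOn ℝ f (Set.Icc vlo vhi))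
    (hreg : StrictMonoOn (phi F f) (Set.Icc vlo vhi))
    (vM : ℝ) (hvM : IsLeast {v ∈ Set.Icc vlo vhi | 0 ≤ phi F f v} vM)
    (θ : ℝ → ℝ)
    (hθ : ∀ k ∈ Set.Ioo (0:ℝ) 1, θ k ∈ Set.Icc vlo vhi ∧
      k * Gfun F f vhi (θ k) = phi F f (θ k) * (F (θ k)) ^ 2)
    (hθuniq : ∀ k ∈ Set.Ioo (0:ℝ) 1, ∀ v ∈ Set.Icc vlo vhi,
      k * Gfun F f vhi v = phi F f v * (F v) ^ 2 → v = θ k)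
    (hvMlo : vM = vlo)
    (hhazard : MonotoneOn (fun v => f v / (1 - F v)) (Set.Ico vlo vhi)) :
    AntitoneOn (fun k => θ k * (1 - k / F (θ k))) (Set.Ioo (0:ℝ) 1) ↔
      f vlo * vlo ≥ 2 := by
  have h : RegularValueDistribution F f vlo vhi := ⟨hlt, hFderiv, hfpos, hfdiff, hFlo, hFhi, hreg⟩
  have hφ : 0 ≤ phi F f vlo := (hvMlo ▸ hvM.1).2
  have hK : ∀ k ∈ Ioo (0 : ℝ) 1, θ k ∈ Icc vlo vhi ∧ thresholdCapacity F f (θ k) = k :=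
    fun k hk => ⟨(hθ k hk).1, (h.thresholdCapacity_eq_iff hφ (hθ k hk).1).2 (hθ k hk).2⟩
  have hKuniq : ∀ k ∈ Ioo (0 : ℝ) 1, ∀ v ∈ Icc vlo vhi, thresholdCapacity F f v = k → v = θ k :=
    fun k hk v hv hKv => hθuniq k hk v hv ((h.thresholdCapacity_eq_iff hφ hv).1 hKv)
  have hθmono : StrictMonoOn θ (Ioo 0 1) :=
    strictMonoOn_of_unique_preimage (h.continuousOn_thresholdCapacity hφ)
      (fun k hk => h.thresholdCapacity_left ▸ hk.1.le) hK hKuniq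
  have himage := h.image_eq_Ioo_of_thresholdCapacity hφ hK hKuniq
  have hprice : EqOn (fun k => θ k * (1 - k / F (θ k))) (thresholdPrice F f ∘ θ) (Ioo 0 1) :=
    fun k hk => h.mul_one_sub_div_eq_thresholdPrice hφ
      (himage ▸ mem_image_of_mem θ hk) (hK k hk).2
  rw [hprice.congr_antitoneOn, hθmono.antitoneOn_comp_iff, himage]
  exact h.antitoneOn_thresholdPrice_iff hφ hhazard

/-- suppose `vᴹ = v̲` and the hazard rate `f/(1 − F)` is nondecreasing
on `[v̲, v̄)`. Then the posted price `p(k) = ϑ(k)·(1 − k/F(ϑ(k)))` is non-increasing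
in `k` on `(0,1)` iff `f(v̲)·v̲ ≥ 2`. -/
theorem stmt_17
    (vlo vhi : ℝ) (hvlo : 0 ≤ vlo) (hlt : vlo < vhi)
    (F f : ℝ → ℝ) (hFmono : Monotone F)
    (hFlo : F vlo = 0) (hFhi : F vhi = 1)
    (hFderiv : ∀ v ∈ Set.Icc vlo vhi, HasDerivAt F (f v) v)
    (hfpos : ∀ v ∈ Set.Icc vlo vhi, 0 < f v)
    (hfdiff : DifferentiableOn ℝ f (Set.Icc vlo vhi))
    (hreg : StrictMonoOn (phi F f) (Set.Icc vlo vhi))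
    (vM : ℝ) (hvM : IsLeast {v ∈ Set.Icc vlo vhi | 0 ≤ phi F f v} vM)
    (FInv : ℝ → ℝ)
    (hFInv : ∀ k ∈ Set.Ioo (0:ℝ) 1, FInv k ∈ Set.Icc vlo vhi ∧ F (FInv k) = k)
    (θ : ℝ → ℝ)
    (hθ : ∀ k ∈ Set.Ioo (0:ℝ) 1, θ k ∈ Set.Icc vlo vhi ∧
      k * Gfun F f vhi (θ k) = phi F f (θ k) * (F (θ k)) ^ 2)
    (hθuniq : ∀ k ∈ Set.Ioo (0:ℝ) 1, ∀ v ∈ Set.Icc vlo vhi,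
      k * Gfun F f vhi v = phi F f v * (F v) ^ 2 → v = θ k)
    (hθloc : ∀ k ∈ Set.Ioo (0:ℝ) 1, θ k ∈ Set.Ioo (max vM (FInv k)) vhi)
    (hvMlo : vM = vlo)
    (hhazard : MonotoneOn (fun v => f v / (1 - F v)) (Set.Ico vlo vhi)) :
    AntitoneOn (fun k => θ k * (1 - k / F (θ k))) (Set.Ioo (0:ℝ) 1) ↔
      f vlo * vlo ≥ 2 :=
  stmt_17_general vlo vhi hlt F f hFlo hFhi hFderiv hfpos hfdiff hreg vM hvM θ hθ hθuniq hvMlo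
    hhazard
end
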